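/- Let n > 0 and let T = {p_1, …, p_m} be a set of m distinct points in P^3 that is in Cayley–Bacharach position with respect to O(n). Then m ≥ n + 2. -/
import Mathlib

/-- The complex projective space ℙ³ over ℂ. -/
abbrev P3 : Type := Projectivization ℂ (Fin 4 → ℂ)

/-- A homogeneous polynomial `F` in four variables vanishes at a point `p` of ℙ³. -/
def VanishesAt (F : MvPolynomial (Fin 4) ℂ) (p : P3) : Prop :=
  ∀ (v : Fin 4 → ℂ) (hv : v ≠ 0), Projectivization.mk ℂ v hv = p →
    MvPolynomial.eval v F = 0


/-- A finite set `T` of points of ℙ³ is in *Cayley–Bacharach position* with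
respect to `O(n)` if every surface of degree `n` (the zero set of a nonzero
homogeneous polynomial of degree `n` in four variables) passing through any
subset of `T` of cardinality `|T| − 1` also contains the remaining point. -/
def CayleyBacharach (n : ℕ) (T : Finset P3) : Prop :=
  ∀ F : MvPolynomial (Fin 4) ℂ, F ≠ 0 → F.IsHomogeneous n →
    ∀ p ∈ T, (∀ q ∈ T, q ≠ p → VanishesAt F q) → VanishesAt F p

open MvPolynomial

/-- The linear polynomial attached to a linear functional on `ℂ⁴`. -/
noncomputable def linPoly (φ : (Fin 4 → ℂ) →ₗ[ℂ] ℂ) : MvPolynomial (Fin 4) ℂ :=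
  ∑ i, C (φ (Pi.single i 1)) * X i

lemma eval_linPoly (φ : (Fin 4 → ℂ) →ₗ[ℂ] ℂ) (v : Fin 4 → ℂ) :
    eval v (linPoly φ) = φ v := by
  have hv : v = ∑ i, (v i) • (Pi.single i 1 : Fin 4 → ℂ) := by
    funext r
    simp [Finset.sum_apply, Pi.single_apply]
  rw [linPoly, map_sum]
  conv_rhs => rw [hv]
  rw [map_sum]
  refine Finset.sum_congr rfl fun i _ => ?_
  simp [mul_comm]

lemma linPoly_homog (φ : (Fin 4 → ℂ) →ₗ[ℂ] ℂ) : (linPoly φ).IsHomogeneous 1 := by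
  refine IsHomogeneous.sum _ _ _ fun i _ => ?_
  simpa using (isHomogeneous_C (Fin 4) (φ (Pi.single i 1))).mul (isHomogeneous_X ℂ i)

lemma exists_functional {w v : Fin 4 → ℂ} (hv : v ∉ Submodule.span ℂ {w}) :
    ∃ φ : (Fin 4 → ℂ) →ₗ[ℂ] ℂ, φ w = 0 ∧ φ v ≠ 0 := by
  set W := Submodule.span ℂ {w}
  have hπ : W.mkQ v ≠ 0 := by
    simpa [Submodule.mkQ_apply, Submodule.Quotient.mk_eq_zero] using hv
  have := (Module.forall_dual_apply_eq_zero_iff ℂ (W.mkQ v)).not.mpr hπ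
  push_neg at this
  obtain ⟨g, hg⟩ := this
  have hw0 : W.mkQ w = 0 := by
    simp [Submodule.mkQ_apply, Submodule.Quotient.mk_eq_zero, W,
      Submodule.mem_span_singleton_self]
  exact ⟨g.comp W.mkQ, by simp [LinearMap.comp_apply, hw0], by simpa using hg⟩

/-- Let `n > 0` and let `T = {p₁, …, p_m}` be a set of `m`
distinct points in ℙ³ in Cayley–Bacharach position with respect to `O(n)`.
Then `m ≥ n + 2`. -/
theorem stmt_10 (n m : ℕ) (hn : 0 < n) (T : Finset P3) (hm : 0 < m)
    (hcard : T.card = m) (hCB : CayleyBacharach n T) :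
    n + 2 ≤ m := by
  classical
  by_contra hlt
  push_neg at hlt
  have hmle : m ≤ n + 1 := by omega
  obtain ⟨p, hp⟩ := Finset.card_pos.mp (hcard ▸ hm)
  set vp := p.rep with hvp_def
  have hvp : vp ≠ 0 := p.rep_nonzero
  obtain ⟨j, hj⟩ := Function.ne_iff.mp hvp
  have hj' : vp j ≠ 0 := by simpa using hj
  have key : ∀ q : P3, q ∈ T.erase p →
      ∃ φ : (Fin 4 → ℂ) →ₗ[ℂ] ℂ, φ q.rep = 0 ∧ φ vp ≠ 0 := by
    intro q hq
    have hqp : q ≠ p := Finset.ne_of_mem_erase hq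
    apply exists_functional
    intro hmem
    obtain ⟨c, hc⟩ := Submodule.mem_span_singleton.mp hmem
    have hc0 : c ≠ 0 := by
      rintro rfl; simp at hc; exact hvp hc.symm
    apply hqp
    have : Projectivization.mk ℂ vp hvp = Projectivization.mk ℂ q.rep q.rep_nonzero := by
      rw [Projectivization.mk_eq_mk_iff]
      exact ⟨Units.mk0 c hc0, hc⟩
    rw [Projectivization.mk_rep, Projectivization.mk_rep] at this
    exact this.symm ▸ rfl
  choose! φ hφ0 hφp using key
  set k : ℕ := n - (T.erase p).card with hk
  set F : MvPolynomial (Fin 4) ℂ :=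
    (∏ q ∈ T.erase p, linPoly (φ q)) * (X j) ^ k with hF
  have hcarderase : (T.erase p).card = m - 1 := by
    rw [Finset.card_erase_of_mem hp, hcard]
  have hcardle : (T.erase p).card ≤ n := by omega
  have hFhom : F.IsHomogeneous n := by
    have h1 : (∏ q ∈ T.erase p, linPoly (φ q)).IsHomogeneous (T.erase p).card := by
      simpa using IsHomogeneous.prod (T.erase p) (fun q => linPoly (φ q)) (fun _ => 1)
        (fun q _ => linPoly_homog (φ q))
    have h2 : ((X j : MvPolynomial (Fin 4) ℂ) ^ k).IsHomogeneous k := by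
      simpa using (isHomogeneous_X ℂ j).pow k
    have := h1.mul h2
    rwa [show (T.erase p).card + k = n by omega] at this
  have hevalp : eval vp F ≠ 0 := by
    rw [hF, map_mul, map_prod, map_pow]
    apply mul_ne_zero
    · exact Finset.prod_ne_zero_iff.mpr fun q hq => by
        rw [eval_linPoly]; exact hφp q hq
    · simpa using pow_ne_zero k hj'
  have hF0 : F ≠ 0 := by
    intro h; rw [h] at hevalp; simp at hevalp
  have hvan : ∀ q ∈ T, q ≠ p → VanishesAt F q := by
    intro q hq hqp v hv hmk
    have hq' : q ∈ T.erase p := Finset.mem_erase.mpr ⟨hqp, hq⟩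
    obtain ⟨a, ha⟩ := (Projectivization.mk_eq_mk_iff ℂ v q.rep hv q.rep_nonzero).mp
      (by rw [hmk, Projectivization.mk_rep])
    rw [Units.smul_def] at ha
    have hlz : eval v (linPoly (φ q)) = 0 := by
      rw [eval_linPoly, ← ha, map_smul, hφ0 q hq', smul_zero]
    rw [hF, map_mul, map_prod]
    rw [Finset.prod_eq_zero hq' hlz, zero_mul]
  have := hCB F hF0 hFhom p hp hvan vp hvp (Projectivization.mk_rep p)
  exact hevalp this
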